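/- arXiv:1205.0056 — 3 statements merged into one kernel-verified Lean document; each statement's English description precedes it below -/
import Mathlib

section
/- Let 0 < β < 1 and 2 ≤ q < ∞. There exists a constant C > 0, depending only on β and q, such that for every continuously differentiable function f : ℂ → ℝ vanishing outside the closed unit disc, (∫_ℂ |f(z)|^q |z|^{2(β−1)} dA(z))^{1/q} ≤ C [ (∫_ℂ |f(z)|² |z|^{2(β−1)} dA(z))^{1/2} + (∫_ℂ ‖∇f(z)‖² dA(z))^{1/2} ], where dA is Lebesgue measure on ℂ ≅ ℝ². -/
/-!
Because `f` vanishes outside the unit disc, the gradient term alone controls the left-hand side.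
Hölder's inequality with the conjugate exponents `s' = (2 - β)/β` and `s = (2 - β)/(2 - 2β)`
bounds the weighted `L^q` norm of `f` by a constant times its unweighted `L^{q s'}` norm, since
`‖z‖ ^ (2(β - 1) s) = ‖z‖ ^ (β - 2)` is integrable on the disc. In dimension `n = 2`, the
Gagliardo–Nirenberg–Sobolev inequality for `p = 2r/(2 + r) < 2`, followed by Hölder's inequality
on the disc, bounds every `L^r` norm with `r ≥ 2` by the `L^2` norm of the gradient.
-/

open MeasureTheory Set Metric Module Function
open scoped ENNReal NNReal

theorem lintegral_enorm_rpow_mul_le {α F : Type*} [MeasurableSpace α] [NormedAddCommGroup F]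
    (μ : Measure α) {f : α → F} {w : α → ℝ≥0∞} (hf : AEStronglyMeasurable f μ)
    (hw : AEMeasurable w μ) {q s s' : ℝ} (hq : 0 < q) (hs : s'.HolderConjugate s) :
    (∫⁻ x, ‖f x‖ₑ ^ q * w x ∂μ) ^ (1 / q) ≤
      eLpNorm f (ENNReal.ofReal (q * s')) μ * (∫⁻ x, w x ^ s ∂μ) ^ (1 / (q * s)) := by
  have hs' := hs.pos
  have hs0 := hs.symm.pos
  have holder := ENNReal.lintegral_mul_le_Lp_mul_Lq μ hs (hf.enorm.pow_const q) hw
  simp only [Pi.mul_apply, ← ENNReal.rpow_mul] at holder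
  rw [eLpNorm_eq_lintegral_rpow_enorm_toReal (by positivity) ENNReal.ofReal_ne_top,
    ENNReal.toReal_ofReal (by positivity)]
  calc _ ≤ ((∫⁻ x, ‖f x‖ₑ ^ (q * s') ∂μ) ^ (1 / s') * (∫⁻ x, w x ^ s ∂μ) ^ (1 / s)) ^ (1 / q) :=
        ENNReal.rpow_le_rpow holder (by positivity)
    _ = _ := by
      rw [ENNReal.mul_rpow_of_nonneg _ _ (by positivity), ← ENNReal.rpow_mul, ← ENNReal.rpow_mul]
      congr 2 <;> field_simp

section AddHaar

variable {E F : Type*} [NormedAddCommGroup E] [NormedSpace ℝ E] [FiniteDimensional ℝ E]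
  [MeasurableSpace E] [BorelSpace E] {μ : Measure E} [μ.IsAddHaarMeasure]
  [NormedAddCommGroup F]

theorem setLIntegral_closedBall_norm_rpow_lt_top (hd : 1 ≤ finrank ℝ E) {a : ℝ}
    (ha : -(finrank ℝ E : ℝ) < a) (R : ℝ) :
    ∫⁻ x in closedBall (0 : E) R, ENNReal.ofReal (‖x‖ ^ a) ∂μ < ⊤ := by
  have hloc : LocallyIntegrable (fun x : E ↦ ‖x‖ ^ a) μ :=
    locallyIntegrable_of_norm_le_rpow hd (C := 1) (α := -a) (by linarith)
      (ae_of_all _ fun x ↦ by simp [abs_of_nonneg (Real.rpow_nonneg (norm_nonneg x) a)])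
      (measurable_norm.pow_const a).aestronglyMeasurable
  exact (hloc.integrableOn_isCompact (isCompact_closedBall 0 R)).setLIntegral_lt_top

theorem exists_lintegral_rpow_mul_norm_rpow_le_eLpNorm (hd : 1 ≤ finrank ℝ E) {a q s s' : ℝ}
    (hq : 0 < q) (hs : s'.HolderConjugate s) (has : -(finrank ℝ E : ℝ) < a * s) (R : ℝ) :
    ∃ K < ⊤, ∀ f : E → F, AEStronglyMeasurable f μ → support f ⊆ closedBall 0 R →
      (∫⁻ x, ENNReal.ofReal (‖f x‖ ^ q * ‖x‖ ^ a) ∂μ) ^ (1 / q) ≤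
        K * eLpNorm f (ENNReal.ofReal (q * s')) μ := by
  refine ⟨(∫⁻ x in closedBall 0 R, ENNReal.ofReal (‖x‖ ^ a) ^ s ∂μ) ^ (1 / (q * s)), ?_,
    fun f hf hfR ↦ ?_⟩
  · refine ENNReal.rpow_lt_top_of_nonneg (by have := hs.symm.pos; positivity) (ne_of_lt ?_)
    simp_rw [ENNReal.ofReal_rpow_of_nonneg (Real.rpow_nonneg (norm_nonneg _) _) hs.symm.nonneg,
      ← Real.rpow_mul (norm_nonneg _)]
    exact setLIntegral_closedBall_norm_rpow_lt_top hd has R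
  have hsupp : support (fun x ↦ ENNReal.ofReal (‖f x‖ ^ q * ‖x‖ ^ a)) ⊆ closedBall 0 R := by
    refine support_subset_iff'.2 fun x hx ↦ ?_
    simp [notMem_support.1 fun h ↦ hx (hfR h), Real.zero_rpow hq.ne']
  rw [← setLIntegral_eq_of_support_subset hsupp, ← eLpNorm_restrict_eq_of_support_subset hfR,
    mul_comm]
  simp_rw [ENNReal.ofReal_mul (Real.rpow_nonneg (norm_nonneg _) _),
    ← ENNReal.ofReal_rpow_of_nonneg (norm_nonneg _) hq.le, ofReal_norm]
  exact lintegral_enorm_rpow_mul_le _ hf.restrict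
    (measurable_norm.pow_const a).ennreal_ofReal.aemeasurable hq hs

variable [NormedSpace ℝ F] [FiniteDimensional ℝ F]

theorem exists_eLpNorm_le_mul_eLpNorm_fderiv_of_le {s : Set E} (hs : Bornology.IsBounded s)
    {p r t : ℝ≥0} (hp : 1 ≤ p) (hpn : p < finrank ℝ E)
    (hpr : (p : ℝ)⁻¹ - (finrank ℝ E : ℝ)⁻¹ ≤ (r : ℝ)⁻¹) (hpt : p ≤ t) :
    ∃ C < ⊤, ∀ u : E → F, ContDiff ℝ 1 u → support u ⊆ s →
      eLpNorm u r μ ≤ C * eLpNorm (fderiv ℝ u) t μ := by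
  refine ⟨eLpNormLESNormFDerivOfLeConst F μ s p r * μ (closure s) ^ (1 / (p : ℝ) - 1 / t),
    ENNReal.mul_lt_top ENNReal.coe_lt_top ?_, fun u hu hus ↦ ?_⟩
  · refine ENNReal.rpow_lt_top_of_nonneg ?_ hs.closure.measure_lt_top.ne
    have : (1 : ℝ) / t ≤ 1 / p := one_div_le_one_div_of_le (by positivity) (by exact_mod_cast hpt)
    linarith
  have hdu : support (fderiv ℝ u) ⊆ closure s :=
    (support_fderiv_subset (𝕜 := ℝ)).trans (closure_mono hus)
  have holder : eLpNorm (fderiv ℝ u) p μ ≤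
      eLpNorm (fderiv ℝ u) t μ * μ (closure s) ^ (1 / (p : ℝ) - 1 / t) := by
    have h := eLpNorm_le_eLpNorm_mul_rpow_measure_univ (μ := μ.restrict (closure s))
      (ENNReal.coe_le_coe.2 hpt) (hu.continuous_fderiv one_ne_zero).aestronglyMeasurable
    simpa only [eLpNorm_restrict_eq_of_support_subset (ε := E →L[ℝ] F) hdu,
      Measure.restrict_apply_univ, ENNReal.coe_toReal] using h
  calc eLpNorm u r μ ≤ eLpNormLESNormFDerivOfLeConst F μ s p r * eLpNorm (fderiv ℝ u) p μ :=
        eLpNorm_le_eLpNorm_fderiv_of_le μ hu hus hp hpn hpr hs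
    _ ≤ _ := by rw [mul_assoc, mul_comm (μ _ ^ _)]; gcongr

theorem exists_eLpNorm_le_mul_eLpNorm_fderiv_finrank (hn : 2 ≤ finrank ℝ E) {s : Set E}
    (hs : Bornology.IsBounded s) {r : ℝ≥0} (hr : finrank ℝ E ≤ r) :
    ∃ C < ⊤, ∀ u : E → F, ContDiff ℝ 1 u → support u ⊆ s →
      eLpNorm u r μ ≤ C * eLpNorm (fderiv ℝ u) (finrank ℝ E) μ := by
  have hn' : (2 : ℝ) ≤ finrank ℝ E := by exact_mod_cast hn
  have hr' : (finrank ℝ E : ℝ) ≤ r := by exact_mod_cast hr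
  have hnr : (0 : ℝ) < finrank ℝ E + r := by positivity
  -- the exponent `p` with `1/p = 1/n + 1/r`
  refine exists_eLpNorm_le_mul_eLpNorm_fderiv_of_le hs
    (p := finrank ℝ E * r / (finrank ℝ E + r)) ?_ ?_ ?_ ?_
  · rw [← NNReal.coe_le_coe]; push_cast
    rw [le_div_iff₀ hnr]; nlinarith
  · rw [← NNReal.coe_lt_coe]; push_cast
    rw [div_lt_iff₀ hnr]; nlinarith
  · have hr0 : (r : ℝ) ≠ 0 := by linarith
    push_cast
    refine le_of_eq ?_
    field_simp
    ring
  · rw [← NNReal.coe_le_coe]; push_cast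
    rw [div_le_iff₀ hnr]; nlinarith

end AddHaar

theorem eLpNorm_two_eq_lintegral_norm_sq {α F : Type*} [MeasurableSpace α] [NormedAddCommGroup F]
    (μ : Measure α) (f : α → F) :
    eLpNorm f 2 μ = (∫⁻ x, ENNReal.ofReal (‖f x‖ ^ 2) ∂μ) ^ ((1 : ℝ) / 2) := by
  simp [eLpNorm_eq_lintegral_rpow_enorm_toReal, ← ofReal_norm, ENNReal.ofReal_pow]

/-- Sobolev imbedding for the flat cone metric of angle `2πβ` at `0 ∈ ℂ`: for
`2 ≤ q < ∞` there is `C > 0` such that for every `C¹` function `f` vanishing outside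
the closed unit disc,
`(∫ |f|^q |z|^{2(β−1)} dA)^{1/q} ≤ C [(∫ |f|² |z|^{2(β−1)} dA)^{1/2} + (∫ ‖∇f‖² dA)^{1/2}]`. -/
theorem stmt12 (β q : ℝ) (hβ0 : 0 < β) (hβ1 : β < 1) (hq : 2 ≤ q) :
    ∃ C : ℝ, 0 < C ∧
      ∀ f : ℂ → ℝ, ContDiff ℝ 1 f → (∀ z : ℂ, 1 < ‖z‖ → f z = 0) →
        (∫⁻ z : ℂ, ENNReal.ofReal
            (|f z| ^ q * ‖z‖ ^ (2 * (β - 1)))) ^ (1 / q)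
          ≤ ENNReal.ofReal C *
            ((∫⁻ z : ℂ, ENNReal.ofReal
                (|f z| ^ 2 * ‖z‖ ^ (2 * (β - 1)))) ^ ((1 : ℝ) / 2) +
              (∫⁻ z : ℂ, ENNReal.ofReal (‖fderiv ℝ f z‖ ^ 2)) ^ ((1 : ℝ) / 2)) := by
  have hconj : ((2 - β) / β).HolderConjugate ((2 - β) / (2 - 2 * β)) := by
    have : 2 - β ≠ 0 := by linarith
    have : 2 - 2 * β ≠ 0 := by linarith
    rw [Real.holderConjugate_iff]
    refine ⟨by rw [lt_div_iff₀ hβ0]; linarith, ?_⟩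
    field_simp
    ring
  have hweight : -(finrank ℝ ℂ : ℝ) < 2 * (β - 1) * ((2 - β) / (2 - 2 * β)) := by
    rw [Complex.finrank_real_complex, mul_div_assoc', lt_div_iff₀ (by linarith)]
    push_cast
    nlinarith
  have hr : finrank ℝ ℂ ≤ (q * ((2 - β) / β)).toNNReal := by
    have := hconj.lt
    rw [Complex.finrank_real_complex, ← NNReal.coe_le_coe, Real.coe_toNNReal _ (by positivity)]
    push_cast
    nlinarith
  obtain ⟨K, hK, hKf⟩ := exists_lintegral_rpow_mul_norm_rpow_le_eLpNorm (μ := volume) (F := ℝ)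
    (by simp) (by linarith : 0 < q) hconj hweight 1
  obtain ⟨S, hS, hSf⟩ := exists_eLpNorm_le_mul_eLpNorm_fderiv_finrank (μ := volume) (F := ℝ)
    (by simp) isBounded_closedBall hr
  refine ⟨(K * S).toReal + 1, by positivity, fun f hf hf1 ↦ ?_⟩
  have hsupp : support f ⊆ closedBall 0 1 := fun z hz ↦ by
    by_contra h
    exact hz (hf1 z (by simpa using h))
  calc _ ≤ K * eLpNorm f (ENNReal.ofReal (q * ((2 - β) / β))) volume := by
        simpa only [Real.norm_eq_abs] using hKf f hf.continuous.aestronglyMeasurable hsupp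
    _ ≤ K * (S * eLpNorm (fderiv ℝ f) 2 volume) := by
        gcongr
        exact (hSf f hf hsupp).trans_eq (by simp)
    _ = K * S * (∫⁻ z : ℂ, ENNReal.ofReal (‖fderiv ℝ f z‖ ^ 2)) ^ ((1 : ℝ) / 2) := by
        rw [eLpNorm_two_eq_lintegral_norm_sq, mul_assoc]
    _ ≤ _ := by
        gcongr
        · rw [ENNReal.ofReal_add ENNReal.toReal_nonneg zero_le_one, ENNReal.ofReal_toReal
            (ENNReal.mul_lt_top hK hS).ne]
          exact le_self_add
        · exact le_add_self
end

section
/- Let 0 < β < 1. Let v be a real-valued function, continuous on the closed unit disc {z ∈ ℂ : |z| ≤ 1}, twice continuously differentiable on the punctured open disc {0 < |z| < 1}, satisfying Δv ≥ 0 there (Δ the Euclidean Laplacian on ℂ ≅ ℝ²) and sup_{0<|z|<1} |z|^{1−β} ‖∇v(z)‖ < ∞. Then max_{|z|≤1} v = max_{|z|=1} v. -/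
/-- The Euclidean Laplacian on `ℂ ≅ ℝ²`. -/
noncomputable def lap (v : ℂ → ℝ) (z : ℂ) : ℝ :=
  fderiv ℝ (fun w => fderiv ℝ v w 1) z 1 +
    fderiv ℝ (fun w => fderiv ℝ v w Complex.I) z Complex.I

/-!
Perturb `v` by the barrier `ε ‖z‖ ^ (β / 2)`, whose Laplacian `(β / 2) ^ 2 ‖z‖ ^ (β / 2 - 2)` is
positive off the origin. The perturbed function attains its maximum over the closed disc, but not
at an interior point `z ≠ 0`, since there its Laplacian is positive while that of a `C²` function at
a local maximum is `≤ 0`; and not at the origin, since integrating the cone gradient bound along a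
ray gives `v 0 ≤ v z + (M / β) ‖z‖ ^ β`, which the barrier beats near `0`. So the maximum lies on
the circle, and letting `ε → 0` proves the theorem.
-/

open Filter Topology Set
open scoped RealInnerProductSpace

theorem IsLocalMax.le_zero_of_hasDerivAt_of_hasDerivAt {g G : ℝ → ℝ} {a c : ℝ}
    (hmax : IsLocalMax g a) (hg : ∀ᶠ t in 𝓝 a, HasDerivAt g (G t) t)
    (hG : HasDerivAt G c a) : c ≤ 0 := by
  by_contra! hc
  have hderiv : deriv g =ᶠ[𝓝 a] G := hg.mono fun t ht => ht.deriv
  have hmin : IsLocalMin g a :=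
    isLocalMin_of_deriv_deriv_pos (by rwa [hderiv.deriv_eq, hG.deriv])
      (hmax.deriv_eq_zero) hg.self_of_nhds.continuousAt
  -- being both a local minimum and a local maximum, `a` has a neighbourhood where `g` is constant
  have hconst : ∀ᶠ t in 𝓝 a, g =ᶠ[𝓝 t] fun _ => g a := by
    refine Filter.Eventually.eventually_nhds ?_
    filter_upwards [hmin, hmax] with t hmin hmax using le_antisymm hmax hmin
  have hG0 : G =ᶠ[𝓝 a] fun _ => 0 := by
    filter_upwards [hg, hconst] with t ht hct
    exact ht.unique ((hasDerivAt_const t (g a)).congr_of_eventuallyEq hct)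
  exact hc.ne' (hG.unique ((hasDerivAt_const a 0).congr_of_eventuallyEq hG0))

section SecondDirectionalDerivative

variable {E : Type*} [NormedAddCommGroup E] [NormedSpace ℝ E] {w : E → ℝ} {z : E}

theorem ContDiffAt.eventually_differentiableAt (hw : ContDiffAt ℝ 2 w z) :
    ∀ᶠ y in 𝓝 z, DifferentiableAt ℝ w y :=
  (hw.eventually (by simp)).mono fun _ hy => hy.differentiableAt two_ne_zero

theorem ContDiffAt.differentiableAt_fderiv_apply (hw : ContDiffAt ℝ 2 w z) (d : E) :
    DifferentiableAt ℝ (fun y => fderiv ℝ w y d) z :=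
  ((hw.fderiv_right (m := 1) le_rfl).clm_apply contDiffAt_const).differentiableAt one_ne_zero

theorem IsLocalMax.fderiv_fderiv_apply_nonpos (hmax : IsLocalMax w z) (hw : ContDiffAt ℝ 2 w z)
    (d : E) : fderiv ℝ (fun y => fderiv ℝ w y d) z d ≤ 0 := by
  have hline : ∀ t : ℝ, HasDerivAt (fun s : ℝ => z + s • d) d t := fun t => by
    simpa using ((hasDerivAt_id t).smul_const d).const_add z
  have hline_tendsto : Tendsto (fun s : ℝ => z + s • d) (𝓝 0) (𝓝 z) := by
    simpa using (hline 0).continuousAt.tendsto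
  refine IsLocalMax.le_zero_of_hasDerivAt_of_hasDerivAt (g := fun t => w (z + t • d))
    (G := fun t => fderiv ℝ w (z + t • d) d) (a := 0) ?_ ?_ ?_
  · exact IsLocalMax.comp_continuous (g := fun s : ℝ => z + s • d) (by simpa using hmax)
      (hline 0).continuousAt
  · filter_upwards [hline_tendsto.eventually hw.eventually_differentiableAt] with t ht
    exact ht.hasFDerivAt.comp_hasDerivAt t (hline t)
  · exact (hw.differentiableAt_fderiv_apply d).hasFDerivAt.comp_hasDerivAt_of_eq 0 (hline 0)
      (by simp)

theorem fderiv_fderiv_apply_add_const_mul {u : E → ℝ} (hu : ContDiffAt ℝ 2 u z)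
    (hw : ContDiffAt ℝ 2 w z) (c : ℝ) (d : E) :
    fderiv ℝ (fun y => fderiv ℝ (fun x => u x + c * w x) y d) z d =
      fderiv ℝ (fun y => fderiv ℝ u y d) z d + c * fderiv ℝ (fun y => fderiv ℝ w y d) z d := by
  have hfirst : (fun y => fderiv ℝ (fun x => u x + c * w x) y d) =ᶠ[𝓝 z]
      fun y => fderiv ℝ u y d + c * fderiv ℝ w y d := by
    filter_upwards [hu.eventually_differentiableAt, hw.eventually_differentiableAt] with y hu hw
    simp [fderiv_fun_add hu (hw.const_mul c), fderiv_const_mul hw]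
  have hu' := hu.differentiableAt_fderiv_apply d
  have hw' := hw.differentiableAt_fderiv_apply d
  rw [hfirst.fderiv_eq, fderiv_fun_add hu' (hw'.const_mul c), fderiv_const_mul hw']
  simp

end SecondDirectionalDerivative

theorem lap_nonpos_of_isLocalMax {w : ℂ → ℝ} {z : ℂ} (hmax : IsLocalMax w z)
    (hw : ContDiffAt ℝ 2 w z) : lap w z ≤ 0 :=
  add_nonpos (hmax.fderiv_fderiv_apply_nonpos hw 1) (hmax.fderiv_fderiv_apply_nonpos hw _)

theorem lap_add_const_mul {u w : ℂ → ℝ} {z : ℂ} (hu : ContDiffAt ℝ 2 u z)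
    (hw : ContDiffAt ℝ 2 w z) (c : ℝ) :
    lap (fun x => u x + c * w x) z = lap u z + c * lap w z := by
  simp only [lap, fderiv_fderiv_apply_add_const_mul hu hw]
  ring

theorem lap_comp_norm_sq {φ φ' : ℝ → ℝ} {φ'' : ℝ} {z : ℂ}
    (hφ : ∀ᶠ s in 𝓝 (‖z‖ ^ 2), HasDerivAt φ (φ' s) s) (hφ' : HasDerivAt φ' φ'' (‖z‖ ^ 2)) :
    lap (fun y => φ (‖y‖ ^ 2)) z = 4 * (φ' (‖z‖ ^ 2) + ‖z‖ ^ 2 * φ'') := by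
  have hN : ∀ y : ℂ, HasFDerivAt (fun y : ℂ => ‖y‖ ^ 2) (2 • innerSL ℝ y) y := fun y =>
    (hasStrictFDerivAt_norm_sq y).hasFDerivAt
  have hfirst : ∀ d : ℂ, (fun y => fderiv ℝ (fun y => φ (‖y‖ ^ 2)) y d) =ᶠ[𝓝 z]
      fun y => φ' (‖y‖ ^ 2) * (2 * ⟪y, d⟫) := fun d => by
    filter_upwards [(hN z).continuousAt.tendsto.eventually hφ] with y hy
    have h : HasFDerivAt (fun y => φ (‖y‖ ^ 2)) _ y := hy.comp_hasFDerivAt y (hN y)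
    rw [h.fderiv]
    simp only [smul_apply, innerSL_apply_apply, smul_eq_mul, nsmul_eq_mul]
    push_cast; ring
  have hsecond : ∀ d : ℂ, fderiv ℝ (fun y => φ' (‖y‖ ^ 2) * (2 * ⟪y, d⟫)) z d =
      φ'' * (2 * ⟪z, d⟫) ^ 2 + φ' (‖z‖ ^ 2) * (2 * ⟪d, d⟫) := fun d => by
    have hinner : HasFDerivAt (fun y : ℂ => 2 * ⟪y, d⟫) ((2 : ℝ) • innerSL ℝ d) z := by
      simpa only [innerSL_apply_apply, real_inner_comm d] using
        (innerSL ℝ d).hasFDerivAt.const_mul 2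
    have h : HasFDerivAt (fun y => φ' (‖y‖ ^ 2) * (2 * ⟪y, d⟫)) _ z :=
      (hφ'.comp_hasFDerivAt z (hN z)).fun_mul hinner
    rw [h.fderiv]
    simp only [add_apply, smul_apply, innerSL_apply_apply, smul_eq_mul, nsmul_eq_mul,
      Function.comp_apply]
    ring
  have hre : ⟪z, 1⟫ = z.re := by simp [Complex.inner]
  have him : ⟪z, Complex.I⟫ = z.im := by simp [Complex.inner]
  rw [lap, (hfirst 1).fderiv_eq, (hfirst _).fderiv_eq, hsecond, hsecond, hre, him]
  simp only [real_inner_self_eq_norm_sq, norm_one, Complex.norm_I, Complex.sq_norm,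
    Complex.normSq_apply]
  ring

theorem lap_norm_rpow {z : ℂ} (hz : z ≠ 0) (p : ℝ) :
    lap (fun y => ‖y‖ ^ p) z = p ^ 2 * ‖z‖ ^ (p - 2) := by
  have hr : 0 < ‖z‖ ^ 2 := by positivity
  have hsq : ∀ (y : ℂ) (q : ℝ), ‖y‖ ^ q = (‖y‖ ^ 2) ^ (q / 2) := fun y q => by
    rw [← Real.rpow_natCast_mul (norm_nonneg y)]; ring_nf
  have hφ : ∀ᶠ s in 𝓝 (‖z‖ ^ 2), HasDerivAt (· ^ (p / 2)) (p / 2 * s ^ (p / 2 - 1)) s := by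
    filter_upwards [eventually_ne_nhds hr.ne'] with s hs
    exact Real.hasDerivAt_rpow_const (Or.inl hs)
  have hφ' := (Real.hasDerivAt_rpow_const (p := p / 2 - 1) (Or.inl hr.ne')).const_mul (p / 2)
  have hshift : ‖z‖ ^ 2 * (‖z‖ ^ 2) ^ (p / 2 - 1 - 1) = (‖z‖ ^ 2) ^ (p / 2 - 1) := by
    rw [mul_comm, ← Real.rpow_add_one hr.ne', sub_add_cancel]
  simp only [hsq _ p, lap_comp_norm_sq hφ hφ']
  rw [hsq z (p - 2), show (p - 2) / 2 = p / 2 - 1 by ring]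
  linear_combination (2 * p * (p / 2 - 1)) * hshift

theorem le_add_div_of_hasDerivAt_ge {g g' : ℝ → ℝ} {A β : ℝ} (hβ : 0 < β)
    (hg : ContinuousOn g (Icc 0 1)) (hderiv : ∀ t ∈ Ioo (0 : ℝ) 1, HasDerivAt g (g' t) t)
    (hbound : ∀ t ∈ Ioo (0 : ℝ) 1, -(A * t ^ (β - 1)) ≤ g' t) : g 0 ≤ g 1 + A / β := by
  have hmono : MonotoneOn (fun t => g t + A / β * t ^ β) (Icc 0 1) := by
    refine monotoneOn_of_hasDerivWithinAt_nonneg (convex_Icc 0 1)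
      (f' := fun t => g' t + A / β * (β * t ^ (β - 1)))
      (hg.add (continuousOn_const.mul (Real.continuous_rpow_const hβ.le).continuousOn))
      (fun t ht => ?_) (fun t ht => ?_)
    · rw [interior_Icc] at ht
      exact ((hderiv t ht).add
        ((Real.hasDerivAt_rpow_const (Or.inl ht.1.ne')).const_mul (A / β))).hasDerivWithinAt
    · rw [interior_Icc] at ht
      have := hbound t ht
      field_simp
      linarith
  simpa [Real.zero_rpow hβ.ne'] using hmono (left_mem_Icc.2 zero_le_one)
    (right_mem_Icc.2 zero_le_one) zero_le_one

theorem norm_fderiv_le_of_cone_gradient_bound {v : ℂ → ℝ} {β M : ℝ} {x : ℂ} (hx : x ≠ 0)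
    (hgrad : ‖x‖ ^ (1 - β) * ‖fderiv ℝ v x‖ ≤ M) : ‖fderiv ℝ v x‖ ≤ M * ‖x‖ ^ (β - 1) :=
  calc ‖fderiv ℝ v x‖ = ‖x‖ ^ (β - 1) * (‖x‖ ^ (1 - β) * ‖fderiv ℝ v x‖) := by
        rw [← mul_assoc, ← Real.rpow_add (norm_pos_iff.2 hx), sub_add_sub_cancel', sub_self,
          Real.rpow_zero, one_mul]
    _ ≤ ‖x‖ ^ (β - 1) * M := by gcongr
    _ = M * ‖x‖ ^ (β - 1) := mul_comm _ _

theorem le_add_mul_norm_rpow_of_cone_gradient_bound {v : ℂ → ℝ} {β M : ℝ} (hβ : 0 < β)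
    (hcont : ContinuousOn v {z : ℂ | ‖z‖ ≤ 1})
    (hdiff : ∀ z : ℂ, z ≠ 0 → ‖z‖ < 1 → DifferentiableAt ℝ v z)
    (hgrad : ∀ z : ℂ, z ≠ 0 → ‖z‖ < 1 → ‖z‖ ^ (1 - β) * ‖fderiv ℝ v z‖ ≤ M)
    {z : ℂ} (hz : z ≠ 0) (hz1 : ‖z‖ ≤ 1) : v 0 ≤ v z + M / β * ‖z‖ ^ β := by
  have hnorm : ∀ t : ℝ, 0 ≤ t → ‖t • z‖ = t * ‖z‖ := fun t ht => by
    rw [norm_smul, Real.norm_of_nonneg ht]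
  have hseg : ∀ t ∈ Ioo (0 : ℝ) 1, t • z ≠ 0 ∧ ‖t • z‖ < 1 := fun t ht =>
    ⟨smul_ne_zero ht.1.ne' hz, by
      rw [hnorm t ht.1.le]; exact mul_lt_one_of_nonneg_of_lt_one_left ht.1.le ht.2 hz1⟩
  have key := le_add_div_of_hasDerivAt_ge (g := fun t : ℝ => v (t • z))
    (g' := fun t => fderiv ℝ v (t • z) z) (A := M * ‖z‖ ^ β) hβ ?cont ?deriv ?bound
  · simpa [mul_div_right_comm] using key
  case cont =>
    refine hcont.comp (continuous_id.smul continuous_const).continuousOn fun t ht => ?_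
    show ‖t • z‖ ≤ 1
    rw [hnorm t ht.1]; exact mul_le_one₀ ht.2 (norm_nonneg z) hz1
  case deriv =>
    intro t ht
    exact (hdiff _ (hseg t ht).1 (hseg t ht).2).hasFDerivAt.comp_hasDerivAt t
      (by simpa using (hasDerivAt_id t).smul_const z)
  case bound =>
    intro t ht
    have hzpos : 0 < ‖z‖ := norm_pos_iff.2 hz
    calc -(M * ‖z‖ ^ β * t ^ (β - 1)) = -(M * ‖t • z‖ ^ (β - 1) * ‖z‖) := by
          rw [hnorm t ht.1.le, Real.mul_rpow ht.1.le hzpos.le, Real.rpow_sub_one hzpos.ne']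
          field_simp
      _ ≤ -(‖fderiv ℝ v (t • z)‖ * ‖z‖) := by
          gcongr
          exact norm_fderiv_le_of_cone_gradient_bound (hseg t ht).1
            (hgrad _ (hseg t ht).1 (hseg t ht).2)
      _ ≤ fderiv ℝ v (t • z) z := (abs_le.1 ((fderiv ℝ v (t • z)).le_opNorm z)).1

theorem exists_lt_add_mul_rpow_of_le_add_mul_rpow {f : ℝ → ℝ} {C α β ε : ℝ} (hαβ : α < β)
    (hε : 0 < ε) (hf : ∀ t ∈ Ioo (0 : ℝ) 1, f 0 ≤ f t + C * t ^ β) :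
    ∃ t ∈ Ioo (0 : ℝ) 1, f 0 < f t + ε * t ^ α := by
  have hlim : Tendsto (fun t : ℝ => C * t ^ (β - α)) (𝓝[>] 0) (𝓝 0) := by
    have h := (Real.continuousAt_rpow_const 0 (β - α)
      (Or.inr (sub_nonneg.2 hαβ.le))).tendsto.const_mul C
    rw [Real.zero_rpow (sub_pos.2 hαβ).ne', mul_zero] at h
    exact h.mono_left nhdsWithin_le_nhds
  obtain ⟨t, hsmall, ht⟩ :=
    ((hlim.eventually (gt_mem_nhds hε)).and (Ioo_mem_nhdsGT zero_lt_one)).exists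
  refine ⟨t, ht, ?_⟩
  calc f 0 ≤ f t + C * t ^ β := hf t ht
    _ = f t + C * t ^ (β - α) * t ^ α := by
        rw [mul_assoc, ← Real.rpow_add ht.1, sub_add_cancel]
    _ < f t + ε * t ^ α := by gcongr; exact Real.rpow_pos_of_pos ht.1 α

theorem exists_norm_eq_one_isMaxOn_add_mul_norm_rpow {v : ℂ → ℝ} {β ε M : ℝ} (hβ : 0 < β)
    (hε : 0 < ε) (hcont : ContinuousOn v {z : ℂ | ‖z‖ ≤ 1})
    (hC2 : ContDiffOn ℝ 2 v {z : ℂ | ‖z‖ < 1 ∧ z ≠ 0})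
    (hsub : ∀ z : ℂ, z ≠ 0 → ‖z‖ < 1 → 0 ≤ lap v z)
    (hgrad : ∀ z : ℂ, z ≠ 0 → ‖z‖ < 1 → ‖z‖ ^ (1 - β) * ‖fderiv ℝ v z‖ ≤ M) :
    ∃ y : ℂ, ‖y‖ = 1 ∧ IsMaxOn (fun x => v x + ε * ‖x‖ ^ (β / 2)) {z : ℂ | ‖z‖ ≤ 1} y := by
  have hC2at : ∀ z : ℂ, z ≠ 0 → ‖z‖ < 1 → ContDiffAt ℝ 2 v z := fun z hz hz1 =>
    hC2.contDiffAt
      (((isOpen_lt continuous_norm continuous_const).inter isOpen_ne).mem_nhds ⟨hz1, hz⟩)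
  have hdisc : {z : ℂ | ‖z‖ ≤ 1} = Metric.closedBall 0 1 := by ext; simp
  have hw : ContinuousOn (fun x => v x + ε * ‖x‖ ^ (β / 2)) {z : ℂ | ‖z‖ ≤ 1} :=
    hcont.add (continuous_const.mul
      (continuous_norm.rpow_const fun _ => Or.inr (by positivity))).continuousOn
  have hcone : ∀ t ∈ Ioo (0 : ℝ) 1, v (0 : ℝ) ≤ v t + M / β * t ^ β := fun t ht => by
    have hnorm : ‖(t : ℂ)‖ = t := by simp [abs_of_pos ht.1]
    simpa [abs_of_pos ht.1] using le_add_mul_norm_rpow_of_cone_gradient_bound hβ hcont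
      (fun z hz hz1 => (hC2at z hz hz1).differentiableAt two_ne_zero) hgrad
      (z := t) (by exact_mod_cast ht.1.ne') (hnorm.trans_le ht.2.le)
  obtain ⟨y, hy, hmax⟩ := (hdisc ▸ isCompact_closedBall 0 1).exists_isMaxOn ⟨0, by simp⟩ hw
  refine ⟨y, le_antisymm hy (not_lt.1 fun hy1 => ?_), hmax⟩
  rcases eq_or_ne y 0 with rfl | hy0
  · obtain ⟨t, ht, hlt⟩ := exists_lt_add_mul_rpow_of_le_add_mul_rpow (f := fun t : ℝ => v t)
      (half_lt_self hβ) hε hcone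
    have hnorm : ‖(t : ℂ)‖ = t := by simp [abs_of_pos ht.1]
    have := hmax (show ‖(t : ℂ)‖ ≤ 1 from hnorm.trans_le ht.2.le)
    simp only [mem_ofPred_eq, hnorm, norm_zero, Real.zero_rpow (half_pos hβ).ne'] at this
    simp only [Complex.ofReal_zero] at hlt
    linarith
  · have hinterior : {z : ℂ | ‖z‖ ≤ 1} ∈ 𝓝 y :=
      mem_of_superset ((isOpen_lt continuous_norm continuous_const).mem_nhds hy1)
        (ofPred_subset_ofPred.2 fun _ => le_of_lt)
    have hbarrier : ContDiffAt ℝ 2 (fun x : ℂ => ‖x‖ ^ (β / 2)) y :=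
      (Real.contDiffAt_rpow_const_of_ne (norm_ne_zero_iff.2 hy0)).comp y (contDiffAt_norm ℝ hy0)
    have hlap := lap_nonpos_of_isLocalMax (hmax.isLocalMax hinterior)
      ((hC2at y hy0 hy1).add (contDiffAt_const.mul hbarrier))
    rw [lap_add_const_mul (hC2at y hy0 hy1) hbarrier, lap_norm_rpow hy0] at hlap
    have : 0 < ε * ((β / 2) ^ 2 * ‖y‖ ^ (β / 2 - 2)) := by
      have := norm_pos_iff.2 hy0
      positivity
    linarith [hsub y hy0 hy1]

theorem stmt13_general (β : ℝ) (hβ0 : 0 < β) (v : ℂ → ℝ)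
    (hcont : ContinuousOn v {z : ℂ | ‖z‖ ≤ 1})
    (hC2 : ContDiffOn ℝ 2 v {z : ℂ | ‖z‖ < 1 ∧ z ≠ 0})
    (hsub : ∀ z : ℂ, z ≠ 0 → ‖z‖ < 1 → 0 ≤ lap v z)
    (hgrad : ∃ M : ℝ, ∀ z : ℂ, z ≠ 0 → ‖z‖ < 1 →
      ‖z‖ ^ (1 - β) * ‖fderiv ℝ v z‖ ≤ M) :
    sSup (v '' {z : ℂ | ‖z‖ ≤ 1}) = sSup (v '' {z : ℂ | ‖z‖ = 1}) := by
  obtain ⟨M, hM⟩ := hgrad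
  have hcircle : {z : ℂ | ‖z‖ = 1} = Metric.sphere 0 1 := by ext; simp
  obtain ⟨z₁, hz₁, hmax₁⟩ :=
    (hcircle ▸ isCompact_sphere 0 1).exists_isMaxOn ⟨1, by simp⟩ (hcont.mono fun z hz => hz.le)
  have hdisc : IsGreatest (v '' {z : ℂ | ‖z‖ ≤ 1}) (v z₁) := by
    refine ⟨mem_image_of_mem v (show ‖z₁‖ ≤ 1 from hz₁.le), forall_mem_image.2 fun z hz => ?_⟩
    refine le_of_forall_pos_le_add fun ε hε => ?_
    obtain ⟨y, hy, hmax⟩ := exists_norm_eq_one_isMaxOn_add_mul_norm_rpow hβ0 hε hcont hC2 hsub hM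
    have hz : v z + ε * ‖z‖ ^ (β / 2) ≤ v y + ε * ‖y‖ ^ (β / 2) := hmax hz
    have hy₁ : v y ≤ v z₁ := hmax₁ hy
    rw [hy, Real.one_rpow, mul_one] at hz
    have : 0 ≤ ε * ‖z‖ ^ (β / 2) := by positivity
    linarith
  rw [hdisc.csSup_eq, IsGreatest.csSup_eq ⟨mem_image_of_mem v hz₁, forall_mem_image.2 hmax₁⟩]

/-- Maximum principle at a cone singularity: if `v` is continuous on the closed unit
disc, `C²` and subharmonic on the punctured open disc, with cone gradient
`|z|^{1−β}‖∇v‖` bounded there, then the maximum of `v` over the closed disc equals its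
maximum over the boundary circle. -/
theorem stmt13 (β : ℝ) (hβ0 : 0 < β) (hβ1 : β < 1) (v : ℂ → ℝ)
    (hcont : ContinuousOn v {z : ℂ | ‖z‖ ≤ 1})
    (hC2 : ContDiffOn ℝ 2 v {z : ℂ | ‖z‖ < 1 ∧ z ≠ 0})
    (hsub : ∀ z : ℂ, z ≠ 0 → ‖z‖ < 1 → 0 ≤ lap v z)
    (hgrad : ∃ M : ℝ, ∀ z : ℂ, z ≠ 0 → ‖z‖ < 1 →
      ‖z‖ ^ (1 - β) * ‖fderiv ℝ v z‖ ≤ M) :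
    sSup (v '' {z : ℂ | ‖z‖ ≤ 1}) = sSup (v '' {z : ℂ | ‖z‖ = 1}) :=
  stmt13_general β hβ0 v hcont hC2 hsub hgrad
end

section
/- Let 0 < β ≤ 2/3 and let g₀ : ℂ → ℝ be continuously differentiable. Define h on the punctured closed unit disc by h(w) = g₀(|w|^{(1−β)/β} w) · |w|^{2/β − 2}. Then h is real-Fréchet differentiable at every w with 0 < |w| ≤ 1, and there is a constant C > 0, depending only on β, sup_{|z|≤1}|g₀| and sup_{|z|≤1}‖Dg₀‖, such that ‖Dh(w)‖ ≤ C for all 0 < |w| ≤ 1. -/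
/-!
With `a = 1/β - 1` and `b = 2a`, the function is `g₀ (F w) * ‖w‖ ^ b` for the radial map
`F w = ‖w‖ ^ a • w`, whose derivative has norm at most `(|a| + 1) ‖w‖ ^ a`. The product rule
bounds `‖Dh(w)‖` by `|g₀ (F w)| |b| ‖w‖ ^ (b - 1) + ‖Dg₀ (F w)‖ (|a| + 1) ‖w‖ ^ (a + b)`.
Since `‖F w‖ = ‖w‖ ^ (1/β)`, `F` maps the unit ball into itself, where `g₀` and `Dg₀` are
bounded by compactness; the powers of `‖w‖` are at most `1` there because
`b - 1 = 2/β - 3 ≥ 0` exactly when `β ≤ 2/3`.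
-/

open Real Metric

variable {E : Type*} [NormedAddCommGroup E] [InnerProductSpace ℝ E] {x : E}

theorem differentiableAt_norm_rpow (hx : x ≠ 0) (p : ℝ) :
    DifferentiableAt ℝ (fun y : E => ‖y‖ ^ p) x :=
  ((contDiffAt_norm ℝ hx).differentiableAt one_ne_zero).rpow_const
    (Or.inl (norm_ne_zero_iff.2 hx))

theorem norm_fderiv_norm_rpow_le_of_ne_zero (hx : x ≠ 0) (p : ℝ) :
    ‖fderiv ℝ (fun y : E => ‖y‖ ^ p) x‖ ≤ |p| * ‖x‖ ^ (p - 1) := by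
  have hnorm := (contDiffAt_norm ℝ hx).differentiableAt one_ne_zero
  rw [(hnorm.hasFDerivAt.rpow_const (Or.inl (norm_ne_zero_iff.2 hx))).fderiv, norm_smul,
    norm_mul, norm_of_nonneg (rpow_nonneg (norm_nonneg x) _), Real.norm_eq_abs]
  have hnorm_le : ‖fderiv ℝ (fun y : E => ‖y‖) x‖ ≤ 1 := by
    simpa using norm_fderiv_le_of_lipschitz ℝ (lipschitzWith_one_norm (E := E)) (x₀ := x)
  exact mul_le_of_le_one_right (by positivity) hnorm_le

theorem differentiableAt_norm_rpow_smul (hx : x ≠ 0) (a : ℝ) :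
    DifferentiableAt ℝ (fun y : E => ‖y‖ ^ a • y) x :=
  (differentiableAt_norm_rpow hx a).smul differentiableAt_id

theorem norm_fderiv_norm_rpow_smul_le (hx : x ≠ 0) (a : ℝ) :
    ‖fderiv ℝ (fun y : E => ‖y‖ ^ a • y) x‖ ≤ (|a| + 1) * ‖x‖ ^ a := by
  have hx₀ : 0 < ‖x‖ := norm_pos_iff.2 hx
  rw [fderiv_fun_smul (f := fun y : E => y) (differentiableAt_norm_rpow hx a) differentiableAt_id,
    fderiv_fun_id]
  calc _ ≤ ‖x‖ ^ a * ‖ContinuousLinearMap.id ℝ E‖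
          + ‖fderiv ℝ (fun y : E => ‖y‖ ^ a) x‖ * ‖x‖ := by
        refine (norm_add_le _ _).trans (add_le_add ?_ ?_)
        · rw [norm_smul, norm_of_nonneg (rpow_nonneg hx₀.le a)]
        · rw [ContinuousLinearMap.norm_smulRight_apply]
    _ ≤ ‖x‖ ^ a * 1 + |a| * ‖x‖ ^ (a - 1) * ‖x‖ := by
        gcongr
        · exact ContinuousLinearMap.norm_id_le
        · exact norm_fderiv_norm_rpow_le_of_ne_zero hx a
    _ = (|a| + 1) * ‖x‖ ^ a := by
        rw [rpow_sub_one hx₀.ne']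
        field_simp
        ring

variable {g : E → ℝ} {a b : ℝ}

theorem differentiableAt_comp_norm_rpow_smul_mul_norm_rpow (hg : Differentiable ℝ g)
    (hx : x ≠ 0) : DifferentiableAt ℝ (fun y : E => g (‖y‖ ^ a • y) * ‖y‖ ^ b) x :=
  ((hg _).comp x (differentiableAt_norm_rpow_smul hx a)).mul (differentiableAt_norm_rpow hx b)

theorem norm_fderiv_comp_norm_rpow_smul_mul_norm_rpow_le (hg : Differentiable ℝ g)
    (hx : x ≠ 0) :
    ‖fderiv ℝ (fun y : E => g (‖y‖ ^ a • y) * ‖y‖ ^ b) x‖ ≤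
      |g (‖x‖ ^ a • x)| * (|b| * ‖x‖ ^ (b - 1))
        + ‖x‖ ^ b * (‖fderiv ℝ g (‖x‖ ^ a • x)‖ * ((|a| + 1) * ‖x‖ ^ a)) := by
  have hF := differentiableAt_norm_rpow_smul hx a
  rw [fderiv_fun_mul (c := fun y => g (‖y‖ ^ a • y)) ((hg _).comp x hF)
    (differentiableAt_norm_rpow hx b), fderiv_fun_comp x (hg _) hF]
  refine (norm_add_le _ _).trans (add_le_add ?_ ?_)
  · rw [norm_smul, Real.norm_eq_abs]
    gcongr
    exact norm_fderiv_norm_rpow_le_of_ne_zero hx b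
  · rw [norm_smul, norm_of_nonneg (rpow_nonneg (norm_nonneg x) _)]
    gcongr
    exact (ContinuousLinearMap.opNorm_comp_le _ _).trans
      (by gcongr; exact norm_fderiv_norm_rpow_smul_le hx a)

theorem norm_fderiv_comp_norm_rpow_smul_mul_norm_rpow_le_of_bounds (hg : Differentiable ℝ g)
    (ha : 0 ≤ a + 1) (hb : 1 ≤ b) (hab : 0 ≤ a + b) {M₀ M₁ : ℝ}
    (hM₀ : ∀ y ∈ closedBall (0 : E) 1, ‖g y‖ ≤ M₀)
    (hM₁ : ∀ y ∈ closedBall (0 : E) 1, ‖fderiv ℝ g y‖ ≤ M₁) (hx : x ≠ 0) (hx₁ : ‖x‖ ≤ 1) :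
    ‖fderiv ℝ (fun y : E => g (‖y‖ ^ a • y) * ‖y‖ ^ b) x‖ ≤ M₀ * |b| + M₁ * (|a| + 1) := by
  have hx₀ : 0 < ‖x‖ := norm_pos_iff.2 hx
  have hFx : ‖x‖ ^ a • x ∈ closedBall (0 : E) 1 := by
    rw [mem_closedBall_zero_iff, norm_smul, norm_of_nonneg (rpow_nonneg hx₀.le a),
      ← rpow_add_one hx₀.ne']
    exact rpow_le_one hx₀.le hx₁ ha
  have hg₀ : |g (‖x‖ ^ a • x)| ≤ M₀ := hM₀ _ hFx
  have hg₁ := hM₁ _ hFx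
  have hb₁ : ‖x‖ ^ (b - 1) ≤ 1 := rpow_le_one hx₀.le hx₁ (by linarith)
  have hab₁ : ‖x‖ ^ b * ‖x‖ ^ a ≤ 1 := by
    rw [← rpow_add hx₀]
    exact rpow_le_one hx₀.le hx₁ (by rw [add_comm]; exact hab)
  calc _ ≤ |g (‖x‖ ^ a • x)| * (|b| * ‖x‖ ^ (b - 1))
          + ‖x‖ ^ b * (‖fderiv ℝ g (‖x‖ ^ a • x)‖ * ((|a| + 1) * ‖x‖ ^ a)) :=
        norm_fderiv_comp_norm_rpow_smul_mul_norm_rpow_le hg hx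
    _ = |g (‖x‖ ^ a • x)| * |b| * ‖x‖ ^ (b - 1)
          + ‖fderiv ℝ g (‖x‖ ^ a • x)‖ * (|a| + 1) * (‖x‖ ^ b * ‖x‖ ^ a) := by ring
    _ ≤ M₀ * |b| * 1 + M₁ * (|a| + 1) * 1 := by
        have hM₀' : 0 ≤ M₀ := (abs_nonneg _).trans hg₀
        have hM₁' : 0 ≤ M₁ := (norm_nonneg _).trans hg₁
        gcongr
    _ = M₀ * |b| + M₁ * (|a| + 1) := by ring

/-- Boundedness of the connection of the model cone metric in the cone coordinate for
cone angle `0 < β ≤ 2/3`: the function `h(w) = g₀(W⁻¹(w)) |w|^{2/β − 2}`, with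
`W⁻¹(w) = |w|^{(1−β)/β} w` and `g₀` continuously differentiable, is real-Fréchet
differentiable on the punctured closed unit disc with uniformly bounded derivative. -/
theorem stmt14 (β : ℝ) (hβ0 : 0 < β) (hβ1 : β ≤ 2 / 3)
    (g₀ : ℂ → ℝ) (hg : ContDiff ℝ 1 g₀) :
    (∀ w : ℂ, w ≠ 0 → ‖w‖ ≤ 1 →
      DifferentiableAt ℝ
        (fun w : ℂ =>
          g₀ (((‖w‖ ^ ((1 - β) / β) : ℝ) : ℂ) * w) *
            ‖w‖ ^ (2 / β - 2)) w) ∧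
    ∃ C : ℝ, 0 < C ∧
      ∀ w : ℂ, w ≠ 0 → ‖w‖ ≤ 1 →
        ‖fderiv ℝ
            (fun w : ℂ =>
              g₀ (((‖w‖ ^ ((1 - β) / β) : ℝ) : ℂ) * w) *
                ‖w‖ ^ (2 / β - 2)) w‖ ≤ C := by
  have h₃ : 3 ≤ 2 / β := by rw [le_div_iff₀ hβ0]; linarith
  have ha : (1 - β) / β = 2 / β / 2 - 1 := by field_simp
  simp only [← Complex.real_smul]
  have hg₁ := hg.differentiable one_ne_zero
  obtain ⟨M₀, hM₀⟩ := (isCompact_closedBall (0 : ℂ) 1).exists_bound_of_continuousOn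
    hg.continuous.continuousOn
  obtain ⟨M₁, hM₁⟩ := (isCompact_closedBall (0 : ℂ) 1).exists_bound_of_continuousOn
    (hg.continuous_fderiv one_ne_zero).continuousOn
  refine ⟨fun w hw _ => differentiableAt_comp_norm_rpow_smul_mul_norm_rpow hg₁ hw,
    max (M₀ * |2 / β - 2| + M₁ * (|(1 - β) / β| + 1)) 1, lt_max_of_lt_right one_pos,
    fun w hw hw₁ => le_max_of_le_left ?_⟩
  exact norm_fderiv_comp_norm_rpow_smul_mul_norm_rpow_le_of_bounds hg₁ (by rw [ha]; linarith)
    (by linarith) (by rw [ha]; linarith) hM₀ hM₁ hw hw₁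
end
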